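/- Let n ≥ 1 and let V : Fin n → MvPolynomial (Fin n) ℂ be a polynomial map of degree ≤ d with V(0) = 0 and V'(0) = 0, and let F : Fin n → MvPowerSeries (Fin n) ℂ be the unique family of power series with zero constant coefficient satisfying F i = X i + (V i substituted with F). Let ‖V‖ denote the maximum of the absolute values of all coefficients of the polynomials V i. Then for every i and every N ≥ 1, the sum over all exponent multi-indices m of total degree N of |coeff m (F i)| is at most ((2n)^d · (1 + ‖V‖))^(N-1). -/

import Mathlib

/-!
Write `‖G‖_N` for the sum of the absolute values of the coefficients of degree `N` of a power
series `G`. It is subadditive and submultiplicative (`‖GH‖_N ≤ ∑_{a+b=N} ‖G‖_a ‖H‖_b`), so the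
one-variable series `a` with `a_N = max_i ‖F i‖_N` satisfies, coefficientwise,
`a ≤ t + ∑_{k=2}^{d} ‖V‖ n^k a^k`, where `n^k` bounds the number of monomials of degree `k`.
As `a` has no constant term and only powers `k ≥ 2` occur, this inequality determines `a_N` from
`a_1, …, a_{N-1}`, so `a` is dominated by every nonnegative solution `b` of the reverse
inequality. With `x = (2n)^d (1 + ‖V‖) / 4`, the shifted and rescaled Catalan series
`b = ∑ catalan (N-1) x^(N-1) t^N` is one: it satisfies `x b² + t = b`, which bounds `x^(k-1) b^k`
by `b - t`, and `∑_{k=2}^{d} ‖V‖ n^k / x^(k-1) ≤ 1` for this choice of `x`. Finally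
`catalan (N-1) ≤ 4^(N-1)`.
-/

/-- The maximum (supremum) of the absolute values of all coefficients of the
components of a polynomial map `V : ℂ^n → ℂ^n`. -/
noncomputable def coeffNorm {n : ℕ} (V : Fin n → MvPolynomial (Fin n) ℂ) : ℝ :=
  sSup {r : ℝ | ∃ (i : Fin n) (m : Fin n →₀ ℕ), r = ‖MvPolynomial.coeff m (V i)‖}

open Finset

lemma Nat.multichoose_le_pow : ∀ n k : ℕ, n.multichoose k ≤ n ^ k
  | _, 0 => by simp [Nat.multichoose_zero_right]
  | 0, k + 1 => by simp [Nat.multichoose_zero_succ]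
  | n + 1, k + 1 => calc
      (n + 1).multichoose (k + 1) = n.multichoose (k + 1) + (n + 1).multichoose k :=
        Nat.multichoose_succ_succ n k
      _ ≤ n ^ k * n + (n + 1) ^ k := by
        rw [← pow_succ]
        exact add_le_add (Nat.multichoose_le_pow n (k + 1)) (Nat.multichoose_le_pow (n + 1) k)
      _ ≤ (n + 1) ^ k * n + (n + 1) ^ k := by gcongr; omega
      _ = (n + 1) ^ (k + 1) := by ring

lemma Finset.card_finsuppAntidiag_univ_le {σ : Type*} [Fintype σ] [DecidableEq σ] (k : ℕ) :
    #(univ.finsuppAntidiag k : Finset (σ →₀ ℕ)) ≤ Fintype.card σ ^ k := by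
  rw [card_finsuppAntidiag_nat_eq_multichoose]
  exact Nat.multichoose_le_pow _ _

lemma Finset.mem_finsuppAntidiag_univ {σ : Type*} [Fintype σ] [DecidableEq σ] {μ : σ →₀ ℕ}
    {N : ℕ} : μ ∈ univ.finsuppAntidiag N ↔ μ.degree = N := by
  simp [Finsupp.degree_eq_sum]

lemma Finsupp.exists_eq_single_of_degree_eq_one {σ : Type*} {μ : σ →₀ ℕ} (h : μ.degree = 1) :
    ∃ j, μ = single j 1 := by
  obtain ⟨j, hj⟩ := Multiset.card_eq_one.mp ((Finsupp.card_toMultiset μ).trans h)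
  classical
  exact ⟨j, by rw [← Finsupp.toMultiset_toFinsupp μ, hj, Multiset.toFinsupp_singleton]⟩

namespace MvPolynomial

variable {σ : Type*}

lemma degree_mem_Icc_of_mem_support {R : Type*} [CommSemiring R] {P : MvPolynomial σ R} {d : ℕ}
    (hP : P.totalDegree ≤ d) (h0 : coeff 0 P = 0)
    (h1 : ∀ j, coeff (Finsupp.single j 1) P = 0) {μ : σ →₀ ℕ} (hμ : μ ∈ P.support) :
    μ.degree ∈ Icc 2 d := by
  refine mem_Icc.mpr ⟨?_, (le_totalDegree hμ).trans hP⟩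
  by_contra! hlt
  rw [mem_support_iff] at hμ
  interval_cases h : μ.degree
  · exact hμ (by rwa [(Finsupp.degree_eq_zero_iff μ).mp h])
  · obtain ⟨j, rfl⟩ := Finsupp.exists_eq_single_of_degree_eq_one h
    exact hμ (h1 j)

lemma sum_support_norm_coeff_mul_le [Fintype σ] [DecidableEq σ] {R : Type*} [NormedCommRing R]
    (P : MvPolynomial σ R) {s : Finset ℕ} (hs : ∀ μ ∈ P.support, μ.degree ∈ s) {v : ℝ}
    (hv : ∀ μ, ‖coeff μ P‖ ≤ v) {g : ℕ → ℝ} (hg : ∀ k, 0 ≤ g k) :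
    ∑ μ ∈ P.support, ‖coeff μ P‖ * g μ.degree ≤ ∑ k ∈ s, v * Fintype.card σ ^ k * g k := by
  have hv0 : 0 ≤ v := (norm_nonneg _).trans (hv 0)
  calc ∑ μ ∈ P.support, ‖coeff μ P‖ * g μ.degree
      ≤ ∑ μ ∈ P.support, v * g μ.degree := by gcongr with μ; exacts [hg _, hv μ]
    _ = ∑ k ∈ s, ∑ μ ∈ P.support with μ.degree = k, v * g k := by
        rw [← sum_fiberwise_of_maps_to hs]
        exact sum_congr rfl fun k _ => sum_congr rfl fun μ hμ => by rw [(mem_filter.mp hμ).2]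
    _ ≤ ∑ k ∈ s, ∑ μ ∈ univ.finsuppAntidiag k, v * g k := by
        refine sum_le_sum fun k _ => sum_le_sum_of_subset_of_nonneg (fun μ hμ => ?_)
          fun _ _ _ => mul_nonneg hv0 (hg k)
        rw [mem_finsuppAntidiag_univ]
        exact (mem_filter.mp hμ).2
    _ ≤ ∑ k ∈ s, v * Fintype.card σ ^ k * g k := by
        refine sum_le_sum fun k _ => ?_
        rw [sum_const, nsmul_eq_mul, mul_left_comm, ← mul_assoc]
        gcongr
        · exact hg k
        · exact_mod_cast card_finsuppAntidiag_univ_le k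

end MvPolynomial

namespace PowerSeries

lemma coeff_mul_nonneg {a b : PowerSeries ℝ} (ha : ∀ N, 0 ≤ coeff N a) (hb : ∀ N, 0 ≤ coeff N b)
    (N : ℕ) : 0 ≤ coeff N (a * b) := by
  rw [coeff_mul]
  exact sum_nonneg fun ij _ => mul_nonneg (ha ij.1) (hb ij.2)

lemma coeff_pow_nonneg {a : PowerSeries ℝ} (ha : ∀ N, 0 ≤ coeff N a) (k N : ℕ) :
    0 ≤ coeff N (a ^ k) := by
  induction k generalizing N with
  | zero => rw [pow_zero, coeff_one]; positivity
  | succ k ih => rw [pow_succ]; exact coeff_mul_nonneg ih ha N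

lemma coeff_pow_le_coeff_pow {a b : PowerSeries ℝ} {L : ℕ} (ha : ∀ N, 0 ≤ coeff N a)
    (hab : ∀ N ≤ L, coeff N a ≤ coeff N b) (k : ℕ) {N : ℕ} (hN : N ≤ L) :
    coeff N (a ^ k) ≤ coeff N (b ^ k) := by
  induction k generalizing N with
  | zero => rfl
  | succ k ih =>
    rw [pow_succ, pow_succ, coeff_mul, coeff_mul]
    refine sum_le_sum fun ij hij => ?_
    have hi : ij.1 ≤ N := HasAntidiagonal.antidiagonal.fst_le hij
    have hj : ij.2 ≤ N := HasAntidiagonal.antidiagonal.snd_le hij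
    exact mul_le_mul (ih (hi.trans hN)) (hab _ (hj.trans hN)) (ha _)
      ((coeff_pow_nonneg ha k _).trans (ih (hi.trans hN)))

lemma coeff_pow_le_coeff_pow_of_lt {a b : PowerSeries ℝ} {N k : ℕ} (hk : 2 ≤ k)
    (ha0 : constantCoeff a = 0) (hb0 : constantCoeff b = 0) (ha : ∀ M, 0 ≤ coeff M a)
    (hab : ∀ M < N, coeff M a ≤ coeff M b) : coeff N (a ^ k) ≤ coeff N (b ^ k) := by
  obtain ⟨a, rfl⟩ := X_dvd_iff.mpr ha0
  obtain ⟨b, rfl⟩ := X_dvd_iff.mpr hb0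
  rw [mul_pow, mul_pow, coeff_X_pow_mul', coeff_X_pow_mul']
  split_ifs with hkN
  · refine coeff_pow_le_coeff_pow (L := N - k) (fun M => ?_) (fun M hM => ?_) k le_rfl
    · simpa using ha (M + 1)
    · simpa using hab (M + 1) (by omega)
  · rfl

theorem coeff_le_of_subsolution_of_supersolution {a b e : PowerSeries ℝ} {s : Finset ℕ}
    {c : ℕ → ℝ} (hs : ∀ k ∈ s, 2 ≤ k) (hc : ∀ k ∈ s, 0 ≤ c k) (ha0 : constantCoeff a = 0)
    (hb0 : constantCoeff b = 0) (ha : ∀ N, 0 ≤ coeff N a)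
    (hsub : ∀ N, coeff N a ≤ coeff N (e + ∑ k ∈ s, c k • a ^ k))
    (hsuper : ∀ N, coeff N (e + ∑ k ∈ s, c k • b ^ k) ≤ coeff N b) (N : ℕ) :
    coeff N a ≤ coeff N b := by
  induction N using Nat.strong_induction_on with
  | _ N ih =>
    refine (hsub N).trans (le_trans ?_ (hsuper N))
    simp only [map_add, map_sum, coeff_smul, smul_eq_mul]
    gcongr with k hk
    · exact hc k hk
    · exact coeff_pow_le_coeff_pow_of_lt (hs k hk) ha0 hb0 ha ih

noncomputable def scaledCatalan (x : ℝ) : PowerSeries ℝ :=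
  X * rescale x (map (Nat.castRingHom ℝ) catalanSeries)

lemma coeff_succ_scaledCatalan (x : ℝ) (N : ℕ) :
    coeff (N + 1) (scaledCatalan x) = catalan N * x ^ N := by
  simp [scaledCatalan, coeff_rescale, mul_comm]

lemma constantCoeff_scaledCatalan (x : ℝ) : constantCoeff (scaledCatalan x) = 0 := by
  simp [scaledCatalan]

lemma coeff_scaledCatalan_nonneg {x : ℝ} (hx : 0 ≤ x) (N : ℕ) :
    0 ≤ coeff N (scaledCatalan x) := by
  cases N with
  | zero => simp [constantCoeff_scaledCatalan]
  | succ N => rw [coeff_succ_scaledCatalan]; positivity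

lemma smul_scaledCatalan_sq_add_X (x : ℝ) : x • scaledCatalan x ^ 2 + X = scaledCatalan x := by
  have h := congrArg (rescale x ∘ map (Nat.castRingHom ℝ)) catalanSeries_sq_mul_X_add_one
  simp only [Function.comp_apply, map_add, map_mul, map_pow, map_X, map_one, rescale_X] at h
  rw [scaledCatalan, smul_eq_C_mul]
  linear_combination X * h

lemma coeff_succ_scaledCatalan_le {x : ℝ} (hx : 0 ≤ x) (N : ℕ) :
    coeff (N + 1) (scaledCatalan x) ≤ (4 * x) ^ N := by
  have hcat : (catalan N : ℝ) ≤ 4 ^ N := by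
    rw [catalan_eq_centralBinom_div]
    exact_mod_cast (Nat.div_le_self _ _).trans (Nat.centralBinom_le_four_pow N)
  rw [coeff_succ_scaledCatalan, mul_pow]
  gcongr

lemma smul_scaledCatalan_pow_add_X_mul (x : ℝ) (j : ℕ) :
    x • scaledCatalan x ^ (j + 2) + X * scaledCatalan x ^ j = scaledCatalan x ^ (j + 1) := by
  have hb := smul_scaledCatalan_sq_add_X x
  rw [smul_eq_C_mul] at hb ⊢
  linear_combination scaledCatalan x ^ j * hb

lemma pow_mul_coeff_scaledCatalan_pow_add_le {x : ℝ} (hx : 0 ≤ x) (j N : ℕ) :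
    x ^ (j + 1) * coeff N (scaledCatalan x ^ (j + 2)) + coeff N X ≤
      coeff N (scaledCatalan x) := by
  set b := scaledCatalan x
  induction j with
  | zero => simpa [smul_eq_mul] using (congrArg (coeff N) (smul_scaledCatalan_sq_add_X x)).le
  | succ j ih =>
    have h := congrArg (coeff N) (smul_scaledCatalan_pow_add_X_mul x (j + 1))
    have hX : 0 ≤ coeff N (X * b ^ (j + 1)) :=
      coeff_mul_nonneg (fun M => by rw [coeff_X]; split_ifs <;> norm_num)
        (coeff_pow_nonneg (coeff_scaledCatalan_nonneg hx) _) N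
    simp only [map_add, coeff_smul, smul_eq_mul] at h
    calc x ^ (j + 2) * coeff N (b ^ (j + 3)) + coeff N X
        = x ^ (j + 1) * (x * coeff N (b ^ (j + 3))) + coeff N X := by ring
      _ ≤ x ^ (j + 1) * coeff N (b ^ (j + 2)) + coeff N X := by gcongr; linarith
      _ ≤ coeff N b := ih

lemma scaledCatalan_supersolution {x : ℝ} (hx : 0 < x) {s : Finset ℕ} {c : ℕ → ℝ}
    (hs : ∀ k ∈ s, 2 ≤ k) (hc : ∀ k ∈ s, 0 ≤ c k) (hcx : ∑ k ∈ s, c k / x ^ (k - 1) ≤ 1)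
    (N : ℕ) : coeff N (X + ∑ k ∈ s, c k • scaledCatalan x ^ k) ≤ coeff N (scaledCatalan x) := by
  set r := coeff N (scaledCatalan x) - coeff N X
  have hr : 0 ≤ r := by
    have h := pow_mul_coeff_scaledCatalan_pow_add_le hx.le 0 N
    have := mul_nonneg hx.le (coeff_pow_nonneg (coeff_scaledCatalan_nonneg hx.le) 2 N)
    simp only [r, zero_add, pow_one] at h ⊢
    linarith
  have hterm : ∀ k ∈ s, c k * coeff N (scaledCatalan x ^ k) ≤ c k / x ^ (k - 1) * r := by
    intro k hk
    obtain ⟨j, rfl⟩ := Nat.exists_eq_add_of_le' (hs k hk)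
    rw [div_mul_eq_mul_div, mul_div_assoc]
    refine mul_le_mul_of_nonneg_left ?_ (hc _ hk)
    rw [show j + 2 - 1 = j + 1 by omega, le_div_iff₀ (by positivity), mul_comm]
    have := pow_mul_coeff_scaledCatalan_pow_add_le hx.le j N
    simp only [r]
    linarith
  simp only [map_add, map_sum, coeff_smul, smul_eq_mul]
  calc coeff N X + ∑ k ∈ s, c k * coeff N (scaledCatalan x ^ k)
      ≤ coeff N X + (∑ k ∈ s, c k / x ^ (k - 1)) * r := by
        rw [sum_mul]; exact add_le_add le_rfl (sum_le_sum hterm)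
    _ ≤ coeff N X + r := by gcongr; exact mul_le_of_le_one_left hr hcx
    _ = coeff N (scaledCatalan x) := by simp only [r]; ring

end PowerSeries

lemma sum_Icc_div_pow_le_one {n d : ℕ} {v : ℝ} (hn : 1 ≤ n) (hv : 0 ≤ v) :
    ∑ k ∈ Icc 2 d, v * n ^ k / ((2 * n) ^ d * (1 + v) / 4) ^ (k - 1) ≤ 1 := by
  obtain hd | ⟨e, rfl⟩ : d < 2 ∨ ∃ e, d = e + 2 :=
    (lt_or_ge d 2).imp_right fun hd => ⟨d - 2, by omega⟩
  · simp [Icc_eq_empty_of_lt hd]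
  have hn' : (1 : ℝ) ≤ n := by exact_mod_cast hn
  have hx : (2 * n : ℝ) ^ (e + 2) * (1 + v) / 4 = 2 ^ e * n ^ (e + 2) * (1 + v) := by ring
  rw [hx]
  set x : ℝ := 2 ^ e * n ^ (e + 2) * (1 + v)
  have hx1 : 1 ≤ x := one_le_mul_of_one_le_of_one_le
    (one_le_mul_of_one_le_of_one_le (one_le_pow₀ one_le_two) (one_le_pow₀ hn')) (by linarith)
  have hterm : ∀ k ∈ Icc 2 (e + 2), v * n ^ k / x ^ (k - 1) ≤ v * n ^ (e + 2) / x := by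
    intro k hk
    rw [mem_Icc] at hk
    gcongr
    · exact hk.2
    · exact le_self_pow₀ hx1 (by omega)
  have he : (e + 1 : ℝ) ≤ 2 ^ e := by exact_mod_cast Nat.lt_two_pow_self
  calc ∑ k ∈ Icc 2 (e + 2), v * n ^ k / x ^ (k - 1)
      ≤ #(Icc 2 (e + 2)) • (v * n ^ (e + 2) / x) := sum_le_card_nsmul _ _ _ hterm
    _ = (e + 1) * v / (2 ^ e * (1 + v)) := by
        rw [Nat.card_Icc, nsmul_eq_mul]
        field_simp
        push_cast
        ring
    _ ≤ 1 := by
        rw [div_le_one (by positivity)]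
        nlinarith [mul_le_mul_of_nonneg_right he hv]

namespace MvPowerSeries

variable {σ R : Type*} [Fintype σ] [DecidableEq σ]

section NormedRing

variable [NormedRing R]

noncomputable def degreeNorm (G : MvPowerSeries σ R) (N : ℕ) : ℝ :=
  ∑ μ ∈ univ.finsuppAntidiag N, ‖coeff μ G‖

lemma degreeNorm_nonneg (G : MvPowerSeries σ R) (N : ℕ) : 0 ≤ degreeNorm G N :=
  sum_nonneg fun _ _ => norm_nonneg _

lemma degreeNorm_zero (G : MvPowerSeries σ R) : degreeNorm G 0 = ‖constantCoeff G‖ := by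
  simp [degreeNorm]

lemma degreeNorm_add_le (G H : MvPowerSeries σ R) (N : ℕ) :
    degreeNorm (G + H) N ≤ degreeNorm G N + degreeNorm H N := by
  rw [degreeNorm, degreeNorm, degreeNorm, ← sum_add_distrib]
  exact sum_le_sum fun μ _ => by simpa using norm_add_le _ _

lemma degreeNorm_smul_le (c : R) (G : MvPowerSeries σ R) (N : ℕ) :
    degreeNorm (c • G) N ≤ ‖c‖ * degreeNorm G N := by
  rw [degreeNorm, degreeNorm, mul_sum]
  exact sum_le_sum fun μ _ => by simpa using norm_mul_le _ _

lemma sum_finsuppAntidiag_antidiagonal {M : Type*} [AddCommMonoid M] (N : ℕ)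
    (f : (σ →₀ ℕ) × (σ →₀ ℕ) → M) :
    ∑ μ ∈ univ.finsuppAntidiag N, ∑ pq ∈ antidiagonal μ, f pq =
      ∑ ab ∈ antidiagonal N, ∑ pq ∈ univ.finsuppAntidiag ab.1 ×ˢ univ.finsuppAntidiag ab.2,
        f pq := by
  rw [sum_sigma', sum_sigma']
  refine sum_nbij' (fun x => ⟨(x.2.1.degree, x.2.2.degree), x.2⟩) (fun x => ⟨x.2.1 + x.2.2, x.2⟩)
    ?_ ?_ ?_ ?_ fun _ _ => rfl
  all_goals
    rintro ⟨_, p, q⟩ h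
    simp only [mem_sigma, HasAntidiagonal.mem_antidiagonal, mem_product,
      mem_finsuppAntidiag_univ] at h ⊢
  · simp [← h.1, ← h.2]
  · simp [h.2.1, h.2.2, ← h.1]
  · simp [h.2]
  · simp [h.2.1, h.2.2]

lemma degreeNorm_mul_le (G H : MvPowerSeries σ R) (N : ℕ) :
    degreeNorm (G * H) N ≤ ∑ ab ∈ antidiagonal N, degreeNorm G ab.1 * degreeNorm H ab.2 := by
  calc degreeNorm (G * H) N
      ≤ ∑ μ ∈ univ.finsuppAntidiag N, ∑ pq ∈ antidiagonal μ,
          ‖coeff pq.1 G‖ * ‖coeff pq.2 H‖ := by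
        refine sum_le_sum fun μ _ => ?_
        rw [coeff_mul]
        exact (norm_sum_le _ _).trans (sum_le_sum fun _ _ => norm_mul_le _ _)
    _ = _ := by
        simp_rw [sum_finsuppAntidiag_antidiagonal, degreeNorm, sum_mul_sum, sum_product]

def IsMajorant (f : PowerSeries ℝ) (G : MvPowerSeries σ R) : Prop :=
  ∀ N, degreeNorm G N ≤ PowerSeries.coeff N f

namespace IsMajorant

variable {f g : PowerSeries ℝ} {G H : MvPowerSeries σ R}

lemma coeff_nonneg (h : IsMajorant f G) (N : ℕ) : 0 ≤ PowerSeries.coeff N f :=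
  (degreeNorm_nonneg G N).trans (h N)

lemma mono (h : IsMajorant f G) (hfg : ∀ N, PowerSeries.coeff N f ≤ PowerSeries.coeff N g) :
    IsMajorant g G :=
  fun N => (h N).trans (hfg N)

lemma add (hf : IsMajorant f G) (hg : IsMajorant g H) : IsMajorant (f + g) (G + H) :=
  fun N => (degreeNorm_add_le G H N).trans (by simpa using add_le_add (hf N) (hg N))

lemma smul (c : R) (hf : IsMajorant f G) : IsMajorant (‖c‖ • f) (c • G) := fun N =>
  (degreeNorm_smul_le c G N).trans (by simpa using mul_le_mul_of_nonneg_left (hf N) (norm_nonneg c))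

lemma mul (hf : IsMajorant f G) (hg : IsMajorant g H) : IsMajorant (f * g) (G * H) := by
  intro N
  rw [PowerSeries.coeff_mul]
  exact (degreeNorm_mul_le G H N).trans <| sum_le_sum fun ab _ =>
    mul_le_mul (hf ab.1) (hg ab.2) (degreeNorm_nonneg H ab.2) (hf.coeff_nonneg ab.1)

end IsMajorant

lemma isMajorant_sum {ι : Type*} (s : Finset ι) {f : ι → PowerSeries ℝ}
    {G : ι → MvPowerSeries σ R} (h : ∀ t ∈ s, IsMajorant (f t) (G t)) :
    IsMajorant (∑ t ∈ s, f t) (∑ t ∈ s, G t) := by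
  classical
  induction s using Finset.induction_on with
  | empty => intro N; simp [degreeNorm]
  | insert t s ht ih =>
    rw [sum_insert ht, sum_insert ht]
    exact (h t (mem_insert_self t s)).add (ih fun t' ht' => h t' (mem_insert_of_mem ht'))

noncomputable def supMajorant {ι : Type*} (G : ι → MvPowerSeries σ R) : PowerSeries ℝ :=
  PowerSeries.mk fun N => ⨆ i, degreeNorm (G i) N

lemma isMajorant_supMajorant {ι : Type*} [Finite ι] (G : ι → MvPowerSeries σ R) (j : ι) :
    IsMajorant (supMajorant G) (G j) := fun N => by
  simpa [supMajorant] using le_ciSup (Set.finite_range fun i => degreeNorm (G i) N).bddAbove j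

lemma coeff_supMajorant_nonneg {ι : Type*} (G : ι → MvPowerSeries σ R) (N : ℕ) :
    0 ≤ PowerSeries.coeff N (supMajorant G) := by
  simpa [supMajorant] using Real.iSup_nonneg fun i => degreeNorm_nonneg (G i) N

lemma constantCoeff_supMajorant {ι : Type*} {G : ι → MvPowerSeries σ R}
    (h : ∀ i, constantCoeff (G i) = 0) : PowerSeries.constantCoeff (supMajorant G) = 0 := by
  simp [supMajorant, degreeNorm_zero, h]

lemma coeff_supMajorant_le {ι : Type*} [Nonempty ι] {G : ι → MvPowerSeries σ R}
    {f : PowerSeries ℝ} (h : ∀ i, IsMajorant f (G i)) (N : ℕ) :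
    PowerSeries.coeff N (supMajorant G) ≤ PowerSeries.coeff N f := by
  simpa [supMajorant] using ciSup_le fun i => h i N

lemma sum_antidiagonalTuple_norm_coeff {n : ℕ} (G : MvPowerSeries (Fin n) R) (N : ℕ) :
    ∑ m ∈ Nat.antidiagonalTuple n N, ‖coeff (Finsupp.equivFunOnFinite.symm m) G‖ =
      degreeNorm G N := by
  refine sum_equiv Finsupp.equivFunOnFinite.symm (fun m => ?_) fun _ _ => rfl
  simp [Nat.mem_antidiagonalTuple]

section NormOneClass

variable [NormOneClass R]

lemma isMajorant_one : IsMajorant 1 (1 : MvPowerSeries σ R) := by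
  intro N
  simp only [degreeNorm, coeff_one, PowerSeries.coeff_one, apply_ite norm, norm_one, norm_zero,
    sum_ite_eq', mem_finsuppAntidiag_univ, map_zero, eq_comm, le_refl]

lemma isMajorant_X (i : σ) : IsMajorant PowerSeries.X (X i : MvPowerSeries σ R) := by
  intro N
  simp only [degreeNorm, coeff_X, PowerSeries.coeff_X, apply_ite norm, norm_one, norm_zero,
    sum_ite_eq', mem_finsuppAntidiag_univ, Finsupp.degree_single, eq_comm, le_refl]

lemma IsMajorant.pow {f : PowerSeries ℝ} {G : MvPowerSeries σ R} (h : IsMajorant f G) (k : ℕ) :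
    IsMajorant (f ^ k) (G ^ k) := by
  induction k with
  | zero => simpa using isMajorant_one
  | succ k ih => simpa [pow_succ] using ih.mul h

end NormOneClass

end NormedRing

section NormedCommRing

variable [NormedCommRing R] [NormOneClass R]

lemma isMajorant_prod {ι : Type*} (s : Finset ι) {f : ι → PowerSeries ℝ}
    {G : ι → MvPowerSeries σ R} (h : ∀ t ∈ s, IsMajorant (f t) (G t)) :
    IsMajorant (∏ t ∈ s, f t) (∏ t ∈ s, G t) := by
  classical
  induction s using Finset.induction_on with
  | empty => simpa using isMajorant_one
  | insert t s ht ih =>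
    rw [prod_insert ht, prod_insert ht]
    exact (h t (mem_insert_self t s)).mul (ih fun t' ht' => h t' (mem_insert_of_mem ht'))

lemma isMajorant_aeval {τ : Type*} [Fintype τ]
    {a : PowerSeries ℝ} {G : τ → MvPowerSeries σ R} (hG : ∀ j, IsMajorant a (G j))
    (P : MvPolynomial τ R) :
    IsMajorant (∑ μ ∈ P.support, ‖P.coeff μ‖ • a ^ μ.degree) (MvPolynomial.aeval G P) := by
  rw [MvPolynomial.aeval_def, MvPolynomial.eval₂_eq']
  refine isMajorant_sum _ fun μ _ => ?_
  rw [← Algebra.smul_def, Finsupp.degree_eq_sum, ← prod_pow_eq_pow_sum]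
  exact (isMajorant_prod _ fun j _ => (hG j).pow (μ j)).smul _

lemma isMajorant_of_eq_X_add_aeval {V : σ → MvPolynomial σ R} {F : σ → MvPowerSeries σ R}
    {a : PowerSeries ℝ} {s : Finset ℕ} {v : ℝ} (hs : ∀ i, ∀ μ ∈ (V i).support, μ.degree ∈ s)
    (hv : ∀ i μ, ‖(V i).coeff μ‖ ≤ v) (ha : ∀ j, IsMajorant a (F j))
    (hF : ∀ i, F i = X i + MvPolynomial.aeval F (V i)) (i : σ) :
    IsMajorant (PowerSeries.X + ∑ k ∈ s, (v * Fintype.card σ ^ k) • a ^ k) (F i) := by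
  rw [hF i]
  refine ((isMajorant_X i).add (isMajorant_aeval ha (V i))).mono fun N => ?_
  simp only [map_add, map_sum, PowerSeries.coeff_smul, smul_eq_mul]
  exact add_le_add le_rfl <| (V i).sum_support_norm_coeff_mul_le (hs i) (hv i)
    fun k => PowerSeries.coeff_pow_nonneg (ha i).coeff_nonneg k N

end NormedCommRing

end MvPowerSeries

lemma norm_coeff_le_coeffNorm {n : ℕ} (V : Fin n → MvPolynomial (Fin n) ℂ) (i : Fin n)
    (m : Fin n →₀ ℕ) : ‖MvPolynomial.coeff m (V i)‖ ≤ coeffNorm V := by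
  refine le_csSup ⟨∑ j, ∑ μ ∈ (V j).support, ‖MvPolynomial.coeff μ (V j)‖, ?_⟩ ⟨i, m, rfl⟩
  rintro _ ⟨j, μ, rfl⟩
  refine le_trans ?_ (single_le_sum (fun j _ => sum_nonneg fun _ _ => norm_nonneg _) (mem_univ j))
  by_cases hμ : μ ∈ (V j).support
  · exact single_le_sum (f := fun μ => ‖MvPolynomial.coeff μ (V j)‖) (fun _ _ => norm_nonneg _) hμ
  · rw [MvPolynomial.notMem_support_iff.mp hμ, norm_zero]
    exact sum_nonneg fun _ _ => norm_nonneg _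

lemma coeffNorm_nonneg {n : ℕ} (V : Fin n → MvPolynomial (Fin n) ℂ) : 0 ≤ coeffNorm V :=
  Real.sSup_nonneg <| by rintro _ ⟨i, m, rfl⟩; exact norm_nonneg _

open MvPowerSeries in
/-- **Coefficient bounds for the formal inverse.** If `F` is the family of formal power
series with zero constant coefficient solving `F i = X i + V i (F)` (substitution being
polynomial evaluation in the power series ring, which agrees with power-series
substitution since each `F j` has zero constant coefficient), then for every `i` and every
`N ≥ 1`, the sum over all multi-indices `m` of total degree `N` of `|coeff m (F i)|` is at
most `((2n)^d (1 + ‖V‖))^(N-1)`. -/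
theorem formal_inverse_coeff_bound (n d : ℕ) (hn : 1 ≤ n)
    (V : Fin n → MvPolynomial (Fin n) ℂ)
    (hdeg : ∀ i, (V i).totalDegree ≤ d)
    (hV0 : ∀ i, MvPolynomial.coeff 0 (V i) = 0)
    (hV1 : ∀ i j, MvPolynomial.coeff (Finsupp.single j 1) (V i) = 0)
    (F : Fin n → MvPowerSeries (Fin n) ℂ)
    (hF0 : ∀ i, MvPowerSeries.constantCoeff (F i) = 0)
    (hF : ∀ i, F i = MvPowerSeries.X i + MvPolynomial.aeval F (V i)) :
    ∀ (i : Fin n) (N : ℕ), 1 ≤ N →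
      ∑ m ∈ Finset.Nat.antidiagonalTuple n N,
          ‖MvPowerSeries.coeff (Finsupp.equivFunOnFinite.symm m) (F i)‖
        ≤ ((2 * n) ^ d * (1 + coeffNorm V)) ^ (N - 1) := by
  intro i N hN
  have : Nonempty (Fin n) := ⟨⟨0, hn⟩⟩
  set v := coeffNorm V
  set x : ℝ := (2 * n) ^ d * (1 + v) / 4
  have hv : 0 ≤ v := coeffNorm_nonneg V
  have hx : 0 < x := by positivity
  have hsupp : ∀ i, ∀ μ ∈ (V i).support, μ.degree ∈ Icc 2 d := fun i _ hμ =>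
    MvPolynomial.degree_mem_Icc_of_mem_support (hdeg i) (hV0 i) (hV1 i) hμ
  have hsub := coeff_supMajorant_le (isMajorant_of_eq_X_add_aeval hsupp
    (norm_coeff_le_coeffNorm V) (isMajorant_supMajorant F) hF)
  simp only [Fintype.card_fin] at hsub
  have hsuper := PowerSeries.scaledCatalan_supersolution hx (fun k hk => (mem_Icc.mp hk).1)
    (fun k _ => by positivity) (sum_Icc_div_pow_le_one hn hv)
  have hmaj := PowerSeries.coeff_le_of_subsolution_of_supersolution
    (fun k hk => (mem_Icc.mp hk).1) (fun k _ => by positivity) (constantCoeff_supMajorant hF0)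
    (PowerSeries.constantCoeff_scaledCatalan x) (coeff_supMajorant_nonneg F) hsub hsuper
  obtain ⟨N, rfl⟩ := Nat.exists_eq_add_of_le' hN
  rw [sum_antidiagonalTuple_norm_coeff, Nat.add_sub_cancel]
  calc degreeNorm (F i) (N + 1) ≤ PowerSeries.coeff (N + 1) (supMajorant F) :=
        isMajorant_supMajorant F i _
    _ ≤ PowerSeries.coeff (N + 1) (PowerSeries.scaledCatalan x) := hmaj _
    _ ≤ (4 * x) ^ N := PowerSeries.coeff_succ_scaledCatalan_le hx.le N
    _ = ((2 * n) ^ d * (1 + v)) ^ N := by rw [mul_div_cancel₀ _ four_ne_zero]
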